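/- arXiv:2603.12687 — 2 statements merged into one kernel-verified Lean document; each statement's English description precedes it below -/
import Mathlib

section
/- Let n ≥ 1, let φ be a complex-valued Schwartz function on ℝⁿ whose Fourier transform 𝓕φ is supported in the closed ball {ξ ∈ ℝⁿ : |ξ| ≤ 1/4}, let N ≥ 1, and define f_N(x) = φ(x) · ∑_{k=1}^N k^{-3/2} e^{i k x₁}. Then ∫_{ℝⁿ} |ξ₁|² |𝓕f_N(ξ)|² dξ = (∑_{k=1}^N k^{-3}) ∫_{ℝⁿ} ξ₁² |𝓕φ(ξ)|² dξ + 2(∑_{k=1}^N k^{-2}) ∫_{ℝⁿ} ξ₁ |𝓕φ(ξ)|² dξ + (∑_{k=1}^N k^{-1}) ‖φ‖_{L²(ℝⁿ)}². -/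
/-!
Modulation by `e^{ikx₁}` translates `𝓕φ` by `k e₁`, so `𝓕f_N(ξ) = ∑ k^{-3/2} 𝓕φ(ξ - k e₁)`.
Since `𝓕φ` lives in a ball of radius `1/4`, these translates have pairwise disjoint supports and
the square of the sum is the sum of the squares. Translating back, the `k`-th term contributes
`k^{-3} ∫ (ξ₁ + k)² |𝓕φ(ξ)|² dξ`; expanding the square and using Plancherel for the last term
gives the identity.
-/

open MeasureTheory Real
open scoped RealInnerProductSpace

/-- The Fourier transform with normalization `𝓕g(ξ) = (2π)^{-n/2} ∫ g(x) e^{-ix·ξ} dx`. -/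
noncomputable def fourierTr {n : ℕ} (g : EuclideanSpace ℝ (Fin n) → ℂ)
    (ξ : EuclideanSpace ℝ (Fin n)) : ℂ :=
  (((2 * π) ^ (-(n : ℝ) / 2) : ℝ) : ℂ) *
    ∫ x, g x * Complex.exp (-Complex.I * (⟪x, ξ⟫ : ℝ))

open scoped FourierTransform

theorem norm_sq_sum_of_pairwise_eq_zero_or_eq_zero {ι E : Type*} [SeminormedAddCommGroup E]
    {s : Finset ι} {f : ι → E} (h : (s : Set ι).Pairwise fun i j => f i = 0 ∨ f j = 0) :
    ‖∑ i ∈ s, f i‖ ^ 2 = ∑ i ∈ s, ‖f i‖ ^ 2 := by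
  by_cases hzero : ∀ i ∈ s, f i = 0
  · rw [Finset.sum_eq_zero hzero, Finset.sum_eq_zero fun i hi => by simp [hzero i hi]]
    simp
  obtain ⟨i, hi, hfi⟩ := not_forall₂.mp hzero
  have hvanish : ∀ j ∈ s, j ≠ i → f j = 0 := fun j hj hji => (h hj hi hji).resolve_right hfi
  rw [Finset.sum_eq_single_of_mem i hi hvanish,
    Finset.sum_eq_single_of_mem i hi fun j hj hji => by simp [hvanish j hj hji]]

theorem eq_zero_or_eq_zero_of_support_subset_closedBall {E F : Type*} [SeminormedAddCommGroup E]
    [Zero F] {G : E → F} {r : ℝ} (hG : Function.support G ⊆ Metric.closedBall 0 r) {a b : E}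
    (hab : 2 * r < ‖a - b‖) (ξ : E) : G (ξ - a) = 0 ∨ G (ξ - b) = 0 := by
  by_contra! hne
  have ha := mem_closedBall_zero_iff.mp (hG hne.1)
  have hb := mem_closedBall_zero_iff.mp (hG hne.2)
  have : ‖a - b‖ ≤ 2 * r := calc
    ‖a - b‖ = ‖(ξ - b) - (ξ - a)‖ := by congr 1; abel
    _ ≤ ‖ξ - b‖ + ‖ξ - a‖ := norm_sub_le _ _
    _ ≤ 2 * r := by linarith
  linarith

theorem MeasureTheory.Integrable.mul_cexp_of_re_eq_zero {E : Type*} [MeasurableSpace E]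
    {μ : Measure E} [TopologicalSpace E] [OpensMeasurableSpace E] {g f : E → ℂ}
    (hg : Integrable g μ)
    (hf : Continuous f) (hre : ∀ x, (f x).re = 0) :
    Integrable (fun x => g x * Complex.exp (f x)) μ :=
  hg.mul_bdd (c := 1) (Complex.continuous_exp.comp hf).aestronglyMeasurable
    (ae_of_all _ fun x => by simp [Complex.norm_exp, hre x])

theorem HasCompactSupport.integrable_mul_norm_sq_comp_sub {E F : Type*} [NormedAddCommGroup E]
    [MeasurableSpace E] [BorelSpace E] {μ : Measure E} [IsFiniteMeasureOnCompacts μ]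
    [NormedAddCommGroup F] {G : E → F} (hG : HasCompactSupport G) (hGc : Continuous G)
    {w : E → ℝ} (hw : Continuous w) (v : E) :
    Integrable (fun ξ => w ξ * ‖G (ξ - v)‖ ^ 2) μ := by
  have hsupp : HasCompactSupport fun ξ => ‖G (ξ - v)‖ ^ 2 :=
    (hG.comp_homeomorph (Homeomorph.subRight v)).comp_left (g := fun z => ‖z‖ ^ 2) (by simp)
  exact (hw.mul ((hGc.comp (continuous_sub_right v)).norm.pow 2)).integrable_of_hasCompactSupport
    hsupp.mul_left

variable {n : ℕ}

theorem EuclideanSpace.inner_smul_single_one_right (x : EuclideanSpace ℝ (Fin n)) (i : Fin n)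
    (t : ℝ) :
    ⟪x, t • EuclideanSpace.single i (1 : ℝ)⟫ = t * x i := by
  simp [real_inner_smul_right, EuclideanSpace.inner_single_right]

theorem integral_sq_apply_mul_comp_sub_smul_single (i : Fin n)
    {G : EuclideanSpace ℝ (Fin n) → ℝ} (hG : Integrable G) (hG₁ : Integrable fun ξ => ξ i * G ξ)
    (hG₂ : Integrable fun ξ => ξ i ^ 2 * G ξ) (t : ℝ) :
    ∫ ξ, ξ i ^ 2 * G (ξ - t • EuclideanSpace.single i (1 : ℝ)) =
      (∫ ξ, ξ i ^ 2 * G ξ) + 2 * t * (∫ ξ, ξ i * G ξ) + t ^ 2 * ∫ ξ, G ξ := by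
  set e := EuclideanSpace.single i (1 : ℝ)
  rw [← integral_add_right_eq_self _ (t • e)]
  have hexpand : ∀ ξ : EuclideanSpace ℝ (Fin n),
      (ξ + t • e) i ^ 2 * G (ξ + t • e - t • e) =
        ξ i ^ 2 * G ξ + 2 * t * (ξ i * G ξ) + t ^ 2 * G ξ := fun ξ => by
    simp only [PiLp.add_apply, PiLp.smul_apply, PiLp.single_eq_same, smul_eq_mul, mul_one,
      add_sub_cancel_right, e]
    ring
  simp_rw [hexpand]
  rw [integral_add ?_ (hG.const_mul _), integral_add hG₂ (hG₁.const_mul _), integral_const_mul,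
    integral_const_mul]
  exact hG₂.add (hG₁.const_mul _)

theorem fourierTr_eq_fourier (g : EuclideanSpace ℝ (Fin n) → ℂ) (ξ : EuclideanSpace ℝ (Fin n)) :
    fourierTr g ξ = (((2 * π) ^ (-(n : ℝ) / 2) : ℝ) : ℂ) * 𝓕 g ((2 * π)⁻¹ • ξ) := by
  rw [fourierTr, Real.fourier_eq']
  congr 2 with x
  rw [real_inner_smul_right, smul_eq_mul, mul_comm]
  have hπ : (2 : ℝ) * π ≠ 0 := by positivity
  congr 1
  push_cast
  field_simp

theorem fourierTr_const_mul (c : ℂ) (g : EuclideanSpace ℝ (Fin n) → ℂ)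
    (ξ : EuclideanSpace ℝ (Fin n)) : fourierTr (fun x => c * g x) ξ = c * fourierTr g ξ := by
  simp only [fourierTr, mul_assoc, integral_const_mul]
  ring

theorem fourierTr_finset_sum {ι : Type*} (s : Finset ι) {g : ι → EuclideanSpace ℝ (Fin n) → ℂ}
    (hg : ∀ k ∈ s, Integrable (g k)) (ξ : EuclideanSpace ℝ (Fin n)) :
    fourierTr (fun x => ∑ k ∈ s, g k x) ξ = ∑ k ∈ s, fourierTr (g k) ξ := by
  simp only [fourierTr, Finset.sum_mul, ← Finset.mul_sum]
  rw [integral_finsetSum s fun k hk => (hg k hk).mul_cexp_of_re_eq_zero (by fun_prop)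
    fun x => by simp]

theorem fourierTr_mul_cexp_inner (g : EuclideanSpace ℝ (Fin n) → ℂ)
    (v ξ : EuclideanSpace ℝ (Fin n)) :
    fourierTr (fun x => g x * Complex.exp (Complex.I * (⟪x, v⟫ : ℝ))) ξ = fourierTr g (ξ - v) := by
  simp only [fourierTr, inner_sub_right, mul_assoc, ← Complex.exp_add]
  congr 4 with x
  rw [Complex.ofReal_sub]
  congr 2
  ring

theorem SchwartzMap.fourierTr_mul_sum_cexp (φ : SchwartzMap (EuclideanSpace ℝ (Fin n)) ℂ)
    (i : Fin n) (s : Finset ℕ) (c : ℕ → ℂ) (ξ : EuclideanSpace ℝ (Fin n)) :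
    fourierTr (fun x => φ x * ∑ k ∈ s, c k * Complex.exp (Complex.I * (k : ℝ) * x i)) ξ =
      ∑ k ∈ s, c k * fourierTr φ (ξ - (k : ℝ) • EuclideanSpace.single i (1 : ℝ)) := by
  have hmod : ∀ (k : ℕ) (x : EuclideanSpace ℝ (Fin n)), Complex.I * (k : ℝ) * x i =
      Complex.I * (⟪x, (k : ℝ) • EuclideanSpace.single i 1⟫ : ℝ) := fun k x => by
    rw [EuclideanSpace.inner_smul_single_one_right]; push_cast; ring
  simp_rw [hmod, Finset.mul_sum, mul_left_comm (φ _)]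
  rw [fourierTr_finset_sum s fun k _ =>
    (φ.integrable.mul_cexp_of_re_eq_zero (by fun_prop) fun x => by simp).const_mul (c k)]
  simp_rw [fourierTr_const_mul, fourierTr_mul_cexp_inner]

theorem SchwartzMap.continuous_fourierTr (φ : SchwartzMap (EuclideanSpace ℝ (Fin n)) ℂ) :
    Continuous (fourierTr φ) := by
  have hφ : fourierTr φ =
      fun ξ => (((2 * π) ^ (-(n : ℝ) / 2) : ℝ) : ℂ) * 𝓕 φ ((2 * π)⁻¹ • ξ) := by
    funext ξ
    rw [fourierTr_eq_fourier, SchwartzMap.fourier_coe]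
  rw [hφ]
  exact continuous_const.mul ((𝓕 φ).continuous.comp (continuous_const_smul _))

theorem SchwartzMap.integral_norm_sq_fourierTr (φ : SchwartzMap (EuclideanSpace ℝ (Fin n)) ℂ) :
    ∫ ξ, ‖fourierTr φ ξ‖ ^ 2 = ∫ x, ‖φ x‖ ^ 2 := by
  have h2π : (0 : ℝ) < 2 * π := by positivity
  -- the normalization `(2π)^{-n/2}` exactly compensates the Jacobian of `ξ ↦ (2π)⁻¹ • ξ`
  have hc : ((2 * π) ^ (-(n : ℝ) / 2)) ^ 2 * (2 * π) ^ n = 1 := by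
    rw [← Real.rpow_natCast _ 2, ← Real.rpow_mul h2π.le, ← Real.rpow_natCast (2 * π) n,
      ← Real.rpow_add h2π]
    norm_num
  simp_rw [fourierTr_eq_fourier, norm_mul, mul_pow, Complex.norm_real, Real.norm_eq_abs, sq_abs]
  rw [integral_const_mul, Measure.integral_comp_inv_smul (μ := volume)
    (fun η => ‖𝓕 (φ : EuclideanSpace ℝ (Fin n) → ℂ) η‖ ^ 2), finrank_euclideanSpace_fin,
    smul_eq_mul, abs_of_pos (pow_pos h2π n), ← mul_assoc, hc, one_mul,
    ← SchwartzMap.fourier_coe, SchwartzMap.integral_norm_sq_fourier]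

theorem SchwartzMap.norm_sq_fourierTr_mul_sum_cexp (φ : SchwartzMap (EuclideanSpace ℝ (Fin n)) ℂ)
    {r : ℝ} (hsupp : Function.support (fourierTr φ) ⊆ Metric.closedBall 0 r) (hr : r < 1 / 2)
    (i : Fin n) (s : Finset ℕ) (c : ℕ → ℂ) (ξ : EuclideanSpace ℝ (Fin n)) :
    ‖fourierTr (fun x => φ x * ∑ k ∈ s, c k * Complex.exp (Complex.I * (k : ℝ) * x i)) ξ‖ ^ 2 =
      ∑ k ∈ s, ‖c k‖ ^ 2 * ‖fourierTr φ (ξ - (k : ℝ) • EuclideanSpace.single i (1 : ℝ))‖ ^ 2 := by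
  have hdisj : (s : Set ℕ).Pairwise fun k j =>
      c k * fourierTr φ (ξ - (k : ℝ) • EuclideanSpace.single i (1 : ℝ)) = 0 ∨
        c j * fourierTr φ (ξ - (j : ℝ) • EuclideanSpace.single i (1 : ℝ)) = 0 := by
    intro k _ j _ hkj
    have hsep : 2 * r < ‖(k : ℝ) • EuclideanSpace.single i (1 : ℝ) -
        (j : ℝ) • EuclideanSpace.single i (1 : ℝ)‖ := by
      have : (1 : ℝ) ≤ |(k : ℝ) - j| := by
        exact_mod_cast Int.one_le_abs (sub_ne_zero.mpr (Int.natCast_inj.not.mpr hkj))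
      rw [← sub_smul, norm_smul, PiLp.norm_single, norm_one, mul_one, Real.norm_eq_abs]
      linarith
    rcases eq_zero_or_eq_zero_of_support_subset_closedBall hsupp hsep ξ with h | h <;> simp [h]
  rw [φ.fourierTr_mul_sum_cexp, norm_sq_sum_of_pairwise_eq_zero_or_eq_zero hdisj]
  simp only [norm_mul, mul_pow]

theorem SchwartzMap.integral_sq_apply_mul_norm_sq_fourierTr_mul_sum_cexp
    (φ : SchwartzMap (EuclideanSpace ℝ (Fin n)) ℂ) {r : ℝ}
    (hsupp : Function.support (fourierTr φ) ⊆ Metric.closedBall 0 r) (hr : r < 1 / 2)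
    (i : Fin n) (s : Finset ℕ) (c : ℕ → ℂ) :
    ∫ ξ, ξ i ^ 2 *
        ‖fourierTr (fun x => φ x * ∑ k ∈ s, c k * Complex.exp (Complex.I * (k : ℝ) * x i)) ξ‖ ^ 2 =
      ∑ k ∈ s, ‖c k‖ ^ 2 * ((∫ ξ, ξ i ^ 2 * ‖fourierTr φ ξ‖ ^ 2) +
        2 * k * (∫ ξ, ξ i * ‖fourierTr φ ξ‖ ^ 2) + (k : ℝ) ^ 2 * ∫ x, ‖φ x‖ ^ 2) := by
  have hcpt : HasCompactSupport (fourierTr φ) :=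
    HasCompactSupport.intro (isCompact_closedBall 0 r) fun ξ hξ => by
      simpa using mt (@hsupp ξ) hξ
  have hint : ∀ (w : EuclideanSpace ℝ (Fin n) → ℝ), Continuous w → ∀ v,
      Integrable fun ξ => w ξ * ‖fourierTr φ (ξ - v)‖ ^ 2 :=
    fun _ hw v => hcpt.integrable_mul_norm_sq_comp_sub φ.continuous_fourierTr hw v
  have hpt : ∀ ξ : EuclideanSpace ℝ (Fin n), ξ i ^ 2 *
      ‖fourierTr (fun x => φ x * ∑ k ∈ s, c k * Complex.exp (Complex.I * (k : ℝ) * x i)) ξ‖ ^ 2 =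
        ∑ k ∈ s, ‖c k‖ ^ 2 *
          (ξ i ^ 2 * ‖fourierTr φ (ξ - (k : ℝ) • EuclideanSpace.single i (1 : ℝ))‖ ^ 2) :=
    fun ξ => by
      simp_rw [φ.norm_sq_fourierTr_mul_sum_cexp hsupp hr, Finset.mul_sum, mul_left_comm (ξ i ^ 2)]
  simp_rw [hpt]
  rw [integral_finsetSum s fun k _ => (hint (fun ξ => ξ i ^ 2) (by fun_prop) _).const_mul _]
  simp_rw [integral_const_mul, integral_sq_apply_mul_comp_sub_smul_single i
    (G := fun ξ => ‖fourierTr φ ξ‖ ^ 2) (by simpa using hint (fun _ => 1) continuous_const 0)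
    (by simpa using hint (fun ξ => ξ i) (by fun_prop) 0)
    (by simpa using hint (fun ξ => ξ i ^ 2) (by fun_prop) 0),
    φ.integral_norm_sq_fourierTr]

theorem partial_sum_weighted_identity_general (n : ℕ) (hn : 1 ≤ n)
    (φ : SchwartzMap (EuclideanSpace ℝ (Fin n)) ℂ)
    (hsupp : Function.support (fourierTr (⇑φ)) ⊆ Metric.closedBall 0 (1 / 4))
    (N : ℕ) :
    (∫ ξ : EuclideanSpace ℝ (Fin n),
        (ξ ⟨0, hn⟩) ^ 2 *
          ‖fourierTr
            (fun x => φ x * ∑ k ∈ Finset.Icc 1 N,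
              (((k : ℝ) ^ (-(3 : ℝ) / 2) : ℝ) : ℂ) *
                Complex.exp (Complex.I * (k : ℝ) * x ⟨0, hn⟩)) ξ‖ ^ 2) =
      (∑ k ∈ Finset.Icc 1 N, (k : ℝ) ^ (-(3 : ℝ))) *
          (∫ ξ : EuclideanSpace ℝ (Fin n), (ξ ⟨0, hn⟩) ^ 2 * ‖fourierTr (⇑φ) ξ‖ ^ 2) +
        2 * (∑ k ∈ Finset.Icc 1 N, (k : ℝ) ^ (-(2 : ℝ))) *
          (∫ ξ : EuclideanSpace ℝ (Fin n), (ξ ⟨0, hn⟩) * ‖fourierTr (⇑φ) ξ‖ ^ 2) +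
        (∑ k ∈ Finset.Icc 1 N, (k : ℝ) ^ (-(1 : ℝ))) *
          (∫ x : EuclideanSpace ℝ (Fin n), ‖φ x‖ ^ 2) := by
  rw [φ.integral_sq_apply_mul_norm_sq_fourierTr_mul_sum_cexp hsupp (by norm_num)]
  simp only [Finset.mul_sum, Finset.sum_mul, ← Finset.sum_add_distrib]
  refine Finset.sum_congr rfl fun k hk => ?_
  have hk : (0 : ℝ) < k := by exact_mod_cast (Finset.mem_Icc.mp hk).1
  have hcoef : ‖(((k : ℝ) ^ (-(3 : ℝ) / 2) : ℝ) : ℂ)‖ ^ 2 = (k : ℝ) ^ (-(3 : ℝ)) := by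
    rw [Complex.norm_real, Real.norm_eq_abs, sq_abs, ← Real.rpow_natCast, ← Real.rpow_mul hk.le]
    norm_num
  rw [hcoef]
  simp only [Real.rpow_neg hk.le, Real.rpow_one, Real.rpow_ofNat]
  field_simp

/-- For Schwartz `φ` with `𝓕φ` supported in `{|ξ| ≤ 1/4}` and
`f_N(x) = φ(x) ∑_{k=1}^N k^{-3/2} e^{ikx₁}`:
`∫ |ξ₁|² |𝓕f_N(ξ)|² dξ = (∑ k^{-3}) ∫ ξ₁²|𝓕φ|² + 2(∑ k^{-2}) ∫ ξ₁|𝓕φ|² + (∑ k^{-1}) ‖φ‖_{L²}²`. -/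
theorem partial_sum_weighted_identity (n : ℕ) (hn : 1 ≤ n)
    (φ : SchwartzMap (EuclideanSpace ℝ (Fin n)) ℂ)
    (hsupp : Function.support (fourierTr (⇑φ)) ⊆ Metric.closedBall 0 (1 / 4))
    (N : ℕ) (hN : 1 ≤ N) :
    (∫ ξ : EuclideanSpace ℝ (Fin n),
        (ξ ⟨0, hn⟩) ^ 2 *
          ‖fourierTr
            (fun x => φ x * ∑ k ∈ Finset.Icc 1 N,
              (((k : ℝ) ^ (-(3 : ℝ) / 2) : ℝ) : ℂ) *
                Complex.exp (Complex.I * (k : ℝ) * x ⟨0, hn⟩)) ξ‖ ^ 2) =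
      (∑ k ∈ Finset.Icc 1 N, (k : ℝ) ^ (-(3 : ℝ))) *
          (∫ ξ : EuclideanSpace ℝ (Fin n), (ξ ⟨0, hn⟩) ^ 2 * ‖fourierTr (⇑φ) ξ‖ ^ 2) +
        2 * (∑ k ∈ Finset.Icc 1 N, (k : ℝ) ^ (-(2 : ℝ))) *
          (∫ ξ : EuclideanSpace ℝ (Fin n), (ξ ⟨0, hn⟩) * ‖fourierTr (⇑φ) ξ‖ ^ 2) +
        (∑ k ∈ Finset.Icc 1 N, (k : ℝ) ^ (-(1 : ℝ))) *
          (∫ x : EuclideanSpace ℝ (Fin n), ‖φ x‖ ^ 2) :=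
  partial_sum_weighted_identity_general n hn φ hsupp N
end

section
/- Let n ≥ 1. There exists a function f ∈ L¹(ℝⁿ) ∩ L²(ℝⁿ) such that, with the Gaussian window g(y) = e^{-|y|²}, the short-time Fourier transform V_g f(x, ξ) = ∫_{ℝⁿ} f(y) \overline{g(y − x)} e^{-i y·ξ} dy satisfies ∬_{ℝ^{2n}} |V_g f(x, ξ)| dx dξ < ∞, while ∫_{ℝⁿ} |ξ|² |𝓕f(ξ)|² dξ = ∞. In particular, the modulation space M^{1,1}(ℝⁿ) is not contained in the Sobolev space H¹(ℝⁿ). -/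
open MeasureTheory Real
open scoped RealInnerProductSpace ENNReal

/-- The short-time Fourier transform `V_g h(x, ξ) = ∫ h(y) conj(g(y − x)) e^{-iy·ξ} dy`. -/
noncomputable def stft {n : ℕ} (g h : EuclideanSpace ℝ (Fin n) → ℂ)
    (x ξ : EuclideanSpace ℝ (Fin n)) : ℂ :=
  ∫ y, h y * (starRingEnd ℂ) (g (y - x)) * Complex.exp (-Complex.I * (⟪y, ξ⟫ : ℝ))

/-!
The witness is `f(y) = e^{-|y|²} ∑_{k ≥ 1} k^{-3/2} e^{i k ⟪y, u⟫}` for a unit vector `u`.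
Modulation by `v` translates both `𝓕` and `V_g` by `v` in frequency, and for the Gaussian both
transforms are explicit Gaussians. Hence `∬ |V_g f| ≤ (∑ k^{-3/2}) ∬ |V_g e^{-|·|²}| < ∞`, while
`𝓕f` is a sum of positive Gaussian bumps centred at the points `k u`: on the disjoint balls
`B(k u, 1/2)` we get `|ξ|² |𝓕f(ξ)|² ≳ k² · k⁻³ = 1/k`, and the harmonic series diverges.
-/

open Complex (I)
open scoped Complex Function

local notation "𝔼" n:max => EuclideanSpace ℝ (Fin n)

lemma lintegral_eq_top_of_le_on_disjoint_balls {E : Type*} [NormedAddCommGroup E]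
    [MeasurableSpace E] [BorelSpace E] (μ : Measure E) [μ.IsAddHaarMeasure] {F : E → ℝ≥0∞}
    {z : ℕ → E} {r : ℝ} (hr : 0 < r) (hz : Pairwise (Disjoint on fun k => Metric.ball (z k) r))
    {b : ℕ → ℝ≥0∞} (hb : ∑' k, b k = ⊤) (hF : ∀ k, ∀ ξ ∈ Metric.ball (z k) r, b k ≤ F ξ) :
    ∫⁻ ξ, F ξ ∂μ = ⊤ := by
  refine top_le_iff.mp ?_
  calc ⊤ = (∑' k, b k) * μ (Metric.ball 0 r) := by
        rw [hb, ENNReal.top_mul (Metric.measure_ball_pos μ 0 hr).ne']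
    _ = ∑' k, ∫⁻ _ in Metric.ball (z k) r, b k ∂μ := by
        rw [← ENNReal.tsum_mul_right]
        congr 1 with k
        rw [setLIntegral_const, Measure.addHaar_ball_center μ (z k)]
    _ ≤ ∑' k, ∫⁻ ξ in Metric.ball (z k) r, F ξ ∂μ :=
        ENNReal.tsum_le_tsum fun k => setLIntegral_mono' measurableSet_ball (hF k)
    _ = ∫⁻ ξ in ⋃ k, Metric.ball (z k) r, F ξ ∂μ :=
        (lintegral_iUnion (fun _ => measurableSet_ball) hz F).symm
    _ ≤ ∫⁻ ξ, F ξ ∂μ := setLIntegral_le_lintegral _ _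

lemma tsum_ofReal_div_nat_succ_eq_top {C : ℝ} (hC : 0 < C) :
    ∑' k : ℕ, ENNReal.ofReal (C / ((k : ℝ) + 1)) = ⊤ := by
  by_contra h
  have hsum := ENNReal.summable_toReal h
  simp only [ENNReal.toReal_ofReal (div_nonneg hC.le (Nat.cast_add_one_pos _).le)] at hsum
  refine Real.not_summable_natCast_inv ((summable_nat_add_iff 1).mp ?_)
  simpa [div_eq_mul_inv, hC.ne'] using hsum.mul_left C⁻¹

lemma summable_nat_succ_rpow_neg_three_halves :
    Summable (fun k : ℕ => ((k : ℝ) + 1) ^ (-(3 / 2 : ℝ))) := by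
  simpa using (summable_nat_add_iff 1).mpr
    (Real.summable_nat_rpow.mpr (by norm_num : -(3 / 2 : ℝ) < -1))

lemma sq_mul_rpow_neg_three_halves_sq {x : ℝ} (hx : 0 < x) :
    x ^ 2 * (x ^ (-(3 / 2 : ℝ))) ^ 2 = x⁻¹ := by
  rw [← Real.rpow_natCast (x ^ _) 2, ← Real.rpow_mul hx.le, ← Real.rpow_natCast x 2,
    ← Real.rpow_add hx, ← Real.rpow_neg_one]
  norm_num

noncomputable section

variable {n : ℕ}

lemma norm_cexp_neg_I_mul (r : ℝ) : ‖cexp (-I * r)‖ = 1 := by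
  rw [neg_mul, ← mul_neg, ← Complex.ofReal_neg, Complex.norm_exp_I_mul_ofReal]

def gaussian (n : ℕ) (y : 𝔼 n) : ℂ := (Real.exp (-‖y‖ ^ 2) : ℝ)

lemma norm_gaussian (y : 𝔼 n) : ‖gaussian n y‖ = Real.exp (-‖y‖ ^ 2) := by
  rw [gaussian, Complex.norm_real, Real.norm_of_nonneg (Real.exp_pos _).le]

lemma norm_gaussian_le_one (y : 𝔼 n) : ‖gaussian n y‖ ≤ 1 := by
  rw [norm_gaussian, Real.exp_le_one_iff]
  exact neg_nonpos.mpr (sq_nonneg _)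

lemma continuous_gaussian : Continuous (gaussian n) := by
  unfold gaussian; fun_prop

lemma integrable_exp_neg_mul_sq_norm {b : ℝ} (hb : 0 < b) :
    Integrable (fun y : 𝔼 n => Real.exp (-b * ‖y‖ ^ 2)) := by
  have := (GaussianFourier.integrable_cexp_neg_mul_sq_norm_add (V := 𝔼 n)
    (b := b) (by simpa using hb) 0 0).norm
  refine this.congr (ae_of_all _ fun y => ?_)
  simp [Complex.norm_exp, ← Complex.ofReal_pow]

lemma integrable_gaussian : Integrable (gaussian n) := by
  refine ((integrable_exp_neg_mul_sq_norm (n := n) one_pos).ofReal (𝕜 := ℂ)).congr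
    (ae_of_all _ fun y => ?_)
  simp [gaussian]

lemma memLp_gaussian_two : MemLp (gaussian n) 2 := by
  refine (memLp_two_iff_integrable_sq_norm continuous_gaussian.aestronglyMeasurable).mpr
    ((integrable_exp_neg_mul_sq_norm (n := n) two_pos).congr (ae_of_all _ fun y => ?_))
  dsimp only
  rw [norm_gaussian, ← Real.exp_nat_mul]
  ring_nf

lemma integral_exp_neg_mul_sq_norm_mul_cexp {b : ℝ} (hb : 0 < b) (w : 𝔼 n) :
    ∫ y : 𝔼 n, (Real.exp (-b * ‖y‖ ^ 2) : ℂ) * cexp (-I * (⟪y, w⟫ : ℝ)) =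
      (((π / b) ^ ((n : ℝ) / 2) * Real.exp (-‖w‖ ^ 2 / (4 * b)) : ℝ) : ℂ) := by
  have h := GaussianFourier.integral_cexp_neg_mul_sq_norm_add (V := 𝔼 n)
    (b := b) (by simpa using hb) (-I) w
  rw [finrank_euclideanSpace_fin] at h
  convert h using 1
  · congr 1 with y
    rw [Complex.ofReal_exp, ← Complex.exp_add, real_inner_comm]
    push_cast
    ring_nf
  · rw [Complex.ofReal_mul, Complex.ofReal_exp, ← Complex.ofReal_div,
      Complex.ofReal_cpow (div_nonneg pi_pos.le hb.le), neg_sq, Complex.I_sq]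
    push_cast
    ring_nf

lemma fourierTr_gaussian (ξ : 𝔼 n) :
    fourierTr (gaussian n) ξ = ((2 ^ (-(n : ℝ) / 2) * Real.exp (-‖ξ‖ ^ 2 / 4) : ℝ) : ℂ) := by
  have h := integral_exp_neg_mul_sq_norm_mul_cexp (n := n) one_pos ξ
  simp only [neg_one_mul, div_one, mul_one] at h
  rw [fourierTr]
  simp only [gaussian]
  rw [h, ← Complex.ofReal_mul, ← mul_assoc,
    Real.mul_rpow zero_le_two pi_pos.le, mul_assoc (2 ^ _), ← Real.rpow_add pi_pos]
  simp [neg_div]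

lemma stft_gaussian (x ξ : 𝔼 n) :
    stft (gaussian n) (gaussian n) x ξ =
      (((π / 2) ^ ((n : ℝ) / 2) * Real.exp (-‖x‖ ^ 2 / 2) * Real.exp (-‖ξ‖ ^ 2 / 8) : ℝ) : ℂ) *
        cexp (-I * (⟪x, ξ⟫ / 2 : ℝ)) := by
  set c : 𝔼 n := (2 : ℝ)⁻¹ • x
  -- centring at `x / 2` splits the product of the two Gaussians into one in `z` and one in `x`
  have hnorm (z : 𝔼 n) : ‖z + c‖ ^ 2 + ‖z + c - x‖ ^ 2 = 2 * ‖z‖ ^ 2 + ‖x‖ ^ 2 / 2 := by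
    have hx : x = c + c := by simp only [c, ← add_smul]; norm_num
    have hc : ‖c‖ ^ 2 = ‖x‖ ^ 2 / 4 := by
      rw [norm_smul, mul_pow, Real.norm_of_nonneg (by norm_num)]; ring
    rw [hx, add_sub_add_right_eq_sub, norm_add_sq_real, norm_sub_sq_real, hc, ← hx]
    ring
  have hinner (z : 𝔼 n) : ⟪z + c, ξ⟫ = ⟪z, ξ⟫ + ⟪x, ξ⟫ / 2 := by
    rw [inner_add_left, real_inner_smul_left]; ring
  have hshift (z : 𝔼 n) :
      gaussian n (z + c) * (starRingEnd ℂ) (gaussian n (z + c - x)) *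
          cexp (-I * (⟪z + c, ξ⟫ : ℝ)) =
        ((Real.exp (-‖x‖ ^ 2 / 2) : ℝ) : ℂ) * cexp (-I * (⟪x, ξ⟫ / 2 : ℝ)) *
          ((Real.exp (-2 * ‖z‖ ^ 2) : ℂ) * cexp (-I * (⟪z, ξ⟫ : ℝ))) := by
    simp only [gaussian, Complex.conj_ofReal]
    simp only [Complex.ofReal_exp, ← Complex.exp_add, hinner]
    congr 1
    have h := congrArg ((↑) : ℝ → ℂ) (hnorm z)
    push_cast at h ⊢
    linear_combination -h
  rw [stft, ← integral_add_right_eq_self _ c]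
  simp only [hshift]
  rw [integral_const_mul, integral_exp_neg_mul_sq_norm_mul_cexp two_pos]
  push_cast
  ring_nf

lemma integrable_stft_gaussian :
    Integrable (fun q : 𝔼 n × 𝔼 n => stft (gaussian n) (gaussian n) q.1 q.2) := by
  have hbound : Integrable (fun q : 𝔼 n × 𝔼 n => (π / 2) ^ ((n : ℝ) / 2) *
      (Real.exp (-(1 / 2) * ‖q.1‖ ^ 2) * Real.exp (-(1 / 8) * ‖q.2‖ ^ 2))) :=
    ((integrable_exp_neg_mul_sq_norm (by norm_num)).mul_prod
      (integrable_exp_neg_mul_sq_norm (by norm_num))).const_mul _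
  refine hbound.mono' ?_ (ae_of_all _ fun q => le_of_eq ?_)
  · simp only [stft_gaussian]
    exact Continuous.aestronglyMeasurable (by fun_prop)
  · rw [stft_gaussian, norm_mul, norm_cexp_neg_I_mul, mul_one, Complex.norm_real,
      Real.norm_of_nonneg (by positivity)]
    ring_nf

def modulate (v : 𝔼 n) (h : 𝔼 n → ℂ) (y : 𝔼 n) : ℂ := cexp (I * (⟪y, v⟫ : ℝ)) * h y

lemma norm_modulate (v : 𝔼 n) (h : 𝔼 n → ℂ) (y : 𝔼 n) : ‖modulate v h y‖ = ‖h y‖ := by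
  rw [modulate, norm_mul, Complex.norm_exp_I_mul_ofReal, one_mul]

lemma aestronglyMeasurable_modulate (w : 𝔼 n) (hh : AEStronglyMeasurable h) :
    AEStronglyMeasurable (modulate w h) :=
  (Continuous.aestronglyMeasurable (by fun_prop)).mul hh

lemma modulate_mul_cexp_neg_I_inner (v ξ : 𝔼 n) (h : 𝔼 n → ℂ) (y : 𝔼 n) :
    modulate v h y * cexp (-I * (⟪y, ξ⟫ : ℝ)) = h y * cexp (-I * (⟪y, ξ - v⟫ : ℝ)) := by
  rw [modulate, mul_comm (cexp _), mul_assoc, ← Complex.exp_add, inner_sub_right]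
  congr 2
  push_cast
  ring

lemma fourierTr_modulate (v : 𝔼 n) (h : 𝔼 n → ℂ) (ξ : 𝔼 n) :
    fourierTr (modulate v h) ξ = fourierTr h (ξ - v) := by
  simp only [fourierTr, modulate_mul_cexp_neg_I_inner]

lemma stft_modulate (g : 𝔼 n → ℂ) (v : 𝔼 n) (h : 𝔼 n → ℂ) (x ξ : 𝔼 n) :
    stft g (modulate v h) x ξ = stft g h x (ξ - v) := by
  simp only [stft]
  congr 1 with y
  rw [mul_right_comm, modulate_mul_cexp_neg_I_inner, mul_right_comm]

def modulationSeries (c : ℕ → ℂ) (v : ℕ → 𝔼 n) (h : 𝔼 n → ℂ) (y : 𝔼 n) : ℂ :=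
  ∑' k, c k * modulate (v k) h y

section

variable {c : ℕ → ℂ} (v : ℕ → 𝔼 n) {h : 𝔼 n → ℂ}

lemma summable_norm_modulationSeries_terms (hc : Summable (‖c ·‖)) (y : 𝔼 n) :
    Summable (fun k => ‖c k * modulate (v k) h y‖) := by
  simpa only [norm_mul, norm_modulate] using hc.mul_right ‖h y‖

lemma norm_modulationSeries_le (hc : Summable (‖c ·‖)) (y : 𝔼 n) :
    ‖modulationSeries c v h y‖ ≤ (∑' k, ‖c k‖) * ‖h y‖ := by
  refine (norm_tsum_le_tsum_norm (summable_norm_modulationSeries_terms v hc y)).trans_eq ?_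
  simp only [norm_mul, norm_modulate, tsum_mul_right]

lemma aestronglyMeasurable_modulationSeries (hc : Summable (‖c ·‖))
    (hh : AEStronglyMeasurable h) : AEStronglyMeasurable (modulationSeries c v h) :=
  aestronglyMeasurable_of_tendsto_ae Filter.atTop
    (fun _ => Finset.aestronglyMeasurable_fun_sum _ fun k _ =>
      (aestronglyMeasurable_modulate (v k) hh).const_mul (c k))
    (ae_of_all _ fun y =>
      (summable_norm_modulationSeries_terms v hc y).of_norm.hasSum.tendsto_sum_nat)

lemma memLp_modulationSeries {p : ℝ≥0∞} (hc : Summable (‖c ·‖)) (hh : MemLp h p) :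
    MemLp (modulationSeries c v h) p :=
  (hh.norm.const_mul _).mono' (aestronglyMeasurable_modulationSeries v hc hh.1)
    (ae_of_all _ (norm_modulationSeries_le v hc))

lemma integral_modulationSeries_mul (hc : Summable (‖c ·‖)) (hh : Integrable h)
    {K : 𝔼 n → ℂ} {C : ℝ} (hK : AEStronglyMeasurable K) (hKC : ∀ y, ‖K y‖ ≤ C) :
    ∫ y, modulationSeries c v h y * K y = ∑' k, c k * ∫ y, modulate (v k) h y * K y := by
  have hmod (k : ℕ) : Integrable (modulate (v k) h) :=
    hh.norm.mono' (aestronglyMeasurable_modulate (v k) hh.1)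
      (ae_of_all _ fun y => (norm_modulate _ _ y).le)
  have hint (k : ℕ) : Integrable (fun y => c k * modulate (v k) h y * K y) := by
    simpa only [mul_assoc] using
      ((hmod k).mul_bdd hK (ae_of_all _ hKC)).const_mul (c k)
  have hnorm (k : ℕ) : ∫ y, ‖c k * modulate (v k) h y * K y‖ ≤ ‖c k‖ * (C * ∫ y, ‖h y‖) := by
    rw [← integral_const_mul, ← integral_const_mul]
    refine integral_mono (hint k).norm (hh.norm.const_mul _ |>.const_mul _) fun y => ?_
    rw [norm_mul, norm_mul, norm_modulate, mul_assoc, mul_comm ‖h y‖]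
    gcongr
    exact hKC y
  have hsum : Summable (fun k => ∫ y, ‖c k * modulate (v k) h y * K y‖) :=
    (hc.mul_right _).of_nonneg_of_le (fun k => integral_nonneg fun y => norm_nonneg _) hnorm
  simp only [modulationSeries, ← tsum_mul_right]
  rw [← integral_tsum_of_summable_integral_norm hint hsum]
  simp only [mul_assoc, integral_const_mul]

lemma fourierTr_modulationSeries (hc : Summable (‖c ·‖)) (hh : Integrable h) (ξ : 𝔼 n) :
    fourierTr (modulationSeries c v h) ξ = ∑' k, c k * fourierTr h (ξ - v k) := by
  rw [fourierTr, integral_modulationSeries_mul v hc hh (Continuous.aestronglyMeasurable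
    (by fun_prop)) fun y => (norm_cexp_neg_I_mul _).le, ← tsum_mul_left]
  congr 1 with k
  rw [← fourierTr_modulate, fourierTr]
  ring

lemma stft_modulationSeries (hc : Summable (‖c ·‖)) (hh : Integrable h) {g : 𝔼 n → ℂ}
    {C : ℝ} (hg : Continuous g) (hgC : ∀ y, ‖g y‖ ≤ C) (x ξ : 𝔼 n) :
    stft g (modulationSeries c v h) x ξ = ∑' k, c k * stft g h x (ξ - v k) := by
  have hK (y : 𝔼 n) : ‖(starRingEnd ℂ) (g (y - x)) * cexp (-I * (⟪y, ξ⟫ : ℝ))‖ ≤ C := by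
    rw [norm_mul, RCLike.norm_conj, norm_cexp_neg_I_mul, mul_one]
    exact hgC _
  rw [stft]
  simp only [mul_assoc]
  rw [integral_modulationSeries_mul v hc hh (Continuous.aestronglyMeasurable (by fun_prop)) hK]
  congr 1 with k
  rw [← stft_modulate, stft]
  simp only [mul_assoc]

lemma lintegral_norm_stft_modulationSeries_lt_top (hc : Summable (‖c ·‖)) (hh : Integrable h)
    {g : 𝔼 n → ℂ} {C : ℝ} (hg : Continuous g) (hgC : ∀ y, ‖g y‖ ≤ C)
    (hV : Integrable (fun q : 𝔼 n × 𝔼 n => stft g h q.1 q.2)) :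
    ∫⁻ q : 𝔼 n × 𝔼 n, ENNReal.ofReal ‖stft g (modulationSeries c v h) q.1 q.2‖ < ⊤ := by
  set V := fun q : 𝔼 n × 𝔼 n => stft g h q.1 q.2
  have : (volume : Measure (𝔼 n × 𝔼 n)).IsAddRightInvariant := by
    rw [Measure.volume_eq_prod]; infer_instance
  have hpt (q : 𝔼 n × 𝔼 n) : ENNReal.ofReal ‖stft g (modulationSeries c v h) q.1 q.2‖ ≤
      ∑' k, ‖c k‖ₑ * ‖V (q - (0, v k))‖ₑ := by
    rw [ofReal_norm, stft_modulationSeries v hc hh hg hgC]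
    refine enorm_tsum_le_tsum_enorm.trans_eq ?_
    simp only [enorm_mul, V, Prod.fst_sub, Prod.snd_sub, sub_zero]
  calc _ ≤ ∫⁻ q, ∑' k, ‖c k‖ₑ * ‖V (q - (0, v k))‖ₑ := lintegral_mono hpt
    _ = ∑' k, ‖c k‖ₑ * ∫⁻ q, ‖V q‖ₑ := by
        rw [lintegral_tsum fun k => (hV.comp_sub_right (0, v k)).1.enorm.const_mul _]
        congr 1 with k
        rw [lintegral_const_mul' _ _ enorm_ne_top,
          lintegral_sub_right_eq_self (fun q => ‖V q‖ₑ) (0, v k)]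
    _ = (∑' k, ‖c k‖ₑ) * ∫⁻ q, ‖V q‖ₑ := ENNReal.tsum_mul_right
    _ < ⊤ := ENNReal.mul_lt_top (by simpa using hc.tsum_ofReal_lt_top) hV.2

end

lemma le_norm_fourierTr_modulationSeries_gaussian {a : ℕ → ℝ} (ha : ∀ k, 0 ≤ a k)
    (has : Summable a) (v : ℕ → 𝔼 n) (ξ : 𝔼 n) (k : ℕ) :
    a k * (2 ^ (-(n : ℝ) / 2) * Real.exp (-‖ξ - v k‖ ^ 2 / 4)) ≤
      ‖fourierTr (modulationSeries (fun k => (a k : ℂ)) v (gaussian n)) ξ‖ := by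
  have hc : Summable (fun k => ‖(a k : ℂ)‖) :=
    has.congr fun k => (Complex.norm_of_nonneg (ha k)).symm
  have hterm (j : ℕ) : 0 ≤ a j * (2 ^ (-(n : ℝ) / 2) * Real.exp (-‖ξ - v j‖ ^ 2 / 4)) := by
    have := ha j; positivity
  have hsum : Summable (fun j => a j * (2 ^ (-(n : ℝ) / 2) * Real.exp (-‖ξ - v j‖ ^ 2 / 4))) := by
    refine (has.mul_right (2 ^ (-(n : ℝ) / 2))).of_nonneg_of_le hterm fun j => ?_
    have hexp : Real.exp (-‖ξ - v j‖ ^ 2 / 4) ≤ 1 :=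
      Real.exp_le_one_iff.mpr (by have := sq_nonneg ‖ξ - v j‖; linarith)
    exact mul_le_mul_of_nonneg_left (mul_le_of_le_one_right (by positivity) hexp) (ha j)
  rw [fourierTr_modulationSeries v hc integrable_gaussian]
  simp only [fourierTr_gaussian, ← Complex.ofReal_mul]
  rw [← Complex.ofReal_tsum, Complex.norm_real, Real.norm_of_nonneg (tsum_nonneg hterm)]
  exact hsum.le_tsum k fun j _ => hterm j

def gaussianWaveTrain (u : 𝔼 n) : 𝔼 n → ℂ :=
  modulationSeries (fun k => ((((k : ℝ) + 1) ^ (-(3 / 2 : ℝ)) : ℝ) : ℂ))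
    (fun k => ((k : ℝ) + 1) • u) (gaussian n)

lemma summable_norm_waveTrain_coeff :
    Summable (fun k : ℕ => ‖((((k : ℝ) + 1) ^ (-(3 / 2 : ℝ)) : ℝ) : ℂ)‖) := by
  simpa only [Complex.norm_real, Real.norm_eq_abs] using
    summable_nat_succ_rpow_neg_three_halves.abs

lemma lintegral_sq_norm_mul_sq_norm_fourierTr_gaussianWaveTrain {u : 𝔼 n} (hu : ‖u‖ = 1) :
    ∫⁻ ξ, ENNReal.ofReal (‖ξ‖ ^ 2 * ‖fourierTr (gaussianWaveTrain u) ξ‖ ^ 2) = ⊤ := by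
  set a : ℕ → ℝ := fun k => ((k : ℝ) + 1) ^ (-(3 / 2 : ℝ))
  set β : ℝ := 2 ^ (-(n : ℝ) / 2) * Real.exp (-1)
  set C : ℝ := (β / 2) ^ 2
  have hdist {k j : ℕ} (hkj : k ≠ j) : 1 ≤ dist (((k : ℝ) + 1) • u) (((j : ℝ) + 1) • u) := by
    rw [dist_eq_norm, ← sub_smul, norm_smul, hu, mul_one, add_sub_add_right_eq_sub,
      Real.norm_eq_abs]
    exact_mod_cast Int.one_le_abs (sub_ne_zero.mpr (Int.ofNat_inj.not.mpr hkj))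
  refine lintegral_eq_top_of_le_on_disjoint_balls volume (z := fun k => ((k : ℝ) + 1) • u)
    (half_pos one_pos)
    (fun k j hkj => Metric.ball_disjoint_ball (by linarith [hdist hkj]))
    (tsum_ofReal_div_nat_succ_eq_top (C := C) (by positivity)) fun k ξ hξ => ?_
  rw [Metric.mem_ball, dist_eq_norm] at hξ
  have hk : (0 : ℝ) < k + 1 := Nat.cast_add_one_pos k
  have hnorm : ((k : ℝ) + 1) / 2 ≤ ‖ξ‖ := by
    have := norm_sub_norm_le (((k : ℝ) + 1) • u) ξ
    rw [norm_smul, hu, mul_one, Real.norm_of_nonneg hk.le, norm_sub_rev] at this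
    linarith
  have hfourier : a k * β ≤ ‖fourierTr (gaussianWaveTrain u) ξ‖ := by
    refine le_trans ?_ (le_norm_fourierTr_modulationSeries_gaussian
      (fun k => by positivity) summable_nat_succ_rpow_neg_three_halves _ ξ k)
    simp only [β]
    gcongr
    have := norm_nonneg (ξ - ((k : ℝ) + 1) • u)
    nlinarith
  have hC : C / ((k : ℝ) + 1) = (((k : ℝ) + 1) / 2 * (a k * β)) ^ 2 := by
    rw [div_eq_mul_inv, ← sq_mul_rpow_neg_three_halves_sq hk]
    ring
  rw [hC, ← mul_pow]
  exact ENNReal.ofReal_le_ofReal (pow_le_pow_left₀ (by positivity)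
    (mul_le_mul hnorm hfourier (by positivity) (norm_nonneg _)) 2)

end

/-- There is `f ∈ L¹(ℝⁿ) ∩ L²(ℝⁿ)` whose STFT with Gaussian window
`g(y) = e^{-|y|²}` satisfies `∬ |V_g f| < ∞`, while `∫ |ξ|²|𝓕f(ξ)|² dξ = ∞`;
hence `M^{1,1}(ℝⁿ) ⊄ H¹(ℝⁿ)`. -/
theorem modulation_not_subset_H1 (n : ℕ) (hn : 1 ≤ n) :
    ∃ f : EuclideanSpace ℝ (Fin n) → ℂ,
      Integrable f volume ∧ MemLp f 2 volume ∧
      (∫⁻ q : EuclideanSpace ℝ (Fin n) × EuclideanSpace ℝ (Fin n),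
          ENNReal.ofReal
            ‖stft (fun y : EuclideanSpace ℝ (Fin n) => ((Real.exp (-‖y‖ ^ 2) : ℝ) : ℂ))
              f q.1 q.2‖) < ⊤ ∧
      (∫⁻ ξ : EuclideanSpace ℝ (Fin n),
          ENNReal.ofReal (‖ξ‖ ^ 2 * ‖fourierTr f ξ‖ ^ 2)) = ⊤ := by
  set u : EuclideanSpace ℝ (Fin n) := EuclideanSpace.single ⟨0, hn⟩ 1
  have hu : ‖u‖ = 1 := by simp [u]
  have hc := summable_norm_waveTrain_coeff
  exact ⟨gaussianWaveTrain u,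
    memLp_one_iff_integrable.mp
      (memLp_modulationSeries _ hc (memLp_one_iff_integrable.mpr integrable_gaussian)),
    memLp_modulationSeries _ hc memLp_gaussian_two,
    lintegral_norm_stft_modulationSeries_lt_top _ hc integrable_gaussian continuous_gaussian
      norm_gaussian_le_one integrable_stft_gaussian,
    lintegral_sq_norm_mul_sq_norm_fourierTr_gaussianWaveTrain hu⟩
end
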